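/- Soundness of interval bound propagation for a K-layer network: define recursively the interval bounds [l^{k+1}, u^{k+1}] for z^{k+1} = h_k(W_k z^k + b_k) via the midpoint–radius formulas u^{k+1} = h_k(W_k((u^k+l^k)/2) + b_k + |W_k|((u^k−l^k)/2)) and l^{k+1} = h_k(W_k((u^k+l^k)/2) + b_k − |W_k|((u^k−l^k)/2)). If l^0 ≤ z^0 ≤ u^0, then l^K ≤ z^K ≤ u^K, where z^K is the network output. -/

import Mathlib

/-!
Each layer of interval bound propagation is sound: if `l ≤ x ≤ u`, then `x` lies within the radius
`r = (u - l) / 2` of the midpoint `c = (u + l) / 2` in every coordinate, so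
`|(W x) i - (W c) i| ≤ ∑ j |W i j| r j = (|W| r) i`, and the monotone activation preserves the
resulting two-sided bound on the pre-activation.
-/

open Matrix Finset

/-- The ℓ_p norm on ℝ^ι for a real exponent p. -/
noncomputable def lpNorm {ι : Type*} [Fintype ι] (p : ℝ) (x : ι → ℝ) : ℝ :=
  (∑ i, |x i| ^ p) ^ (1 / p)

section IntervalBoundPropagation

variable {m n : Type*} [Fintype n]

theorem abs_mulVec_sub_mulVec_le {R : Type*} [Ring R] [LinearOrder R] [IsStrictOrderedRing R]
    (A : Matrix m n R) {x c r : n → R}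
    (hr : ∀ j, |x j - c j| ≤ r j) (i : m) :
    |(A *ᵥ x) i - (A *ᵥ c) i| ≤ (A.map abs *ᵥ r) i := by
  rw [← Pi.sub_apply, ← mulVec_sub]
  calc |∑ j, A i j * (x - c) j| ≤ ∑ j, |A i j * (x - c) j| := abs_sum_le_sum_abs _ _
    _ ≤ ∑ j, |A i j| * r j := sum_le_sum fun j _ => by
        rw [abs_mul]
        exact mul_le_mul_of_nonneg_left (hr j) (abs_nonneg _)

variable {R : Type*} [Field R] [LinearOrder R] [IsStrictOrderedRing R]

theorem abs_sub_midpoint_le_half_sub {l x u : R} (hl : l ≤ x) (hu : x ≤ u) :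
    |x - (u + l) / 2| ≤ (u - l) / 2 := by
  rw [abs_le]
  constructor <;> linarith

theorem interval_bound_layer_sound (A : Matrix m n R) (c : m → R) {f : R → R} (hf : Monotone f)
    {x l u : n → R} (hx : ∀ j, l j ≤ x j ∧ x j ≤ u j) (i : m) :
    f ((A *ᵥ (fun j => (u j + l j) / 2) + c) i
        - (A.map abs *ᵥ fun j => (u j - l j) / 2) i) ≤ f ((A *ᵥ x + c) i) ∧
      f ((A *ᵥ x + c) i) ≤ f ((A *ᵥ (fun j => (u j + l j) / 2) + c) i
        + (A.map abs *ᵥ fun j => (u j - l j) / 2) i) := by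
  have hdev := abs_mulVec_sub_mulVec_le A
    (fun j => abs_sub_midpoint_le_half_sub (hx j).1 (hx j).2) i
  rw [abs_le] at hdev
  simp only [Pi.add_apply]
  exact ⟨hf (by linarith [hdev.1]), hf (by linarith [hdev.2])⟩

end IntervalBoundPropagation

/-- soundness of interval bound propagation for a K-layer network. -/
theorem ibp_soundness (K : ℕ) (d : ℕ → ℕ)
    (W : ∀ k : ℕ, Matrix (Fin (d (k + 1))) (Fin (d k)) ℝ)
    (b : ∀ k : ℕ, Fin (d (k + 1)) → ℝ)
    (h : ℕ → ℝ → ℝ) (hmono : ∀ k, Monotone (h k))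
    (z l u : ∀ k : ℕ, Fin (d k) → ℝ)
    (hz : ∀ k < K, z (k + 1) = fun i => h k (((W k).mulVec (z k) + b k) i))
    (hl : ∀ k < K, l (k + 1) = fun i =>
      h k (((W k).mulVec (fun j => (u k j + l k j) / 2) + b k) i
        - ((W k).map (fun x => |x|)).mulVec (fun j => (u k j - l k j) / 2) i))
    (hu : ∀ k < K, u (k + 1) = fun i =>
      h k (((W k).mulVec (fun j => (u k j + l k j) / 2) + b k) i
        + ((W k).map (fun x => |x|)).mulVec (fun j => (u k j - l k j) / 2) i))
    (h0 : ∀ i, l 0 i ≤ z 0 i ∧ z 0 i ≤ u 0 i) :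
    ∀ i, l K i ≤ z K i ∧ z K i ≤ u K i := by
  suffices ∀ k ≤ K, ∀ i, l k i ≤ z k i ∧ z k i ≤ u k i from this K le_rfl
  intro k
  induction k with
  | zero => exact fun _ => h0
  | succ k ih =>
    intro hk
    rw [hz k hk, hl k hk, hu k hk]
    exact interval_bound_layer_sound (W k) (b k) (hmono k) (ih (Nat.le_of_succ_le hk))
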